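/- Duality preserves the binomial theorem: let F be a field of characteristic p > 0, complete with respect to a non-Archimedean norm. Let H be an additive generator with a two-sided composition inverse Hinv which is also an additive generator. Let S ⊆ F and let u : F → (ℕ → F) be a family with u_z(0) = 1 for all z and with u_z a null sequence for every z ∈ S and every z of the form x+y with x,y ∈ S. For such z define v_z(k) := ∑_{m≥0} (coeff_m(Hinv^k))·u_z(m). Then u satisfies the binomial theorem with respect to S — meaning u_{x+y}(n) = ∑_{k=0}^{n} choose(n,k)·u_x(k)·u_y(n-k) for all x,y ∈ S and all n — if and only if v satisfies the binomial theorem with respect to S. -/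

import Mathlib

open Filter

/-- An additive generator: zero constant coefficient, supported on exponents
that are powers of `p`, all coefficients of norm at most `1`, and coefficient
of `T` of norm exactly `1`. -/
def IsAddGen {F : Type*} [NormedField F] (p : ℕ) (H : PowerSeries F) : Prop :=
  PowerSeries.constantCoeff H = 0 ∧
    (∀ n : ℕ, (¬ ∃ m : ℕ, n = p ^ m) → PowerSeries.coeff n H = 0) ∧
    (∀ n : ℕ, ‖PowerSeries.coeff n H‖ ≤ 1) ∧ ‖PowerSeries.coeff 1 H‖ = 1

/-- Composition `P ∘ H` of power series, for `H` with zero constant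
coefficient. -/
noncomputable def psComp {F : Type*} [Field F] (P H : PowerSeries F) : PowerSeries F :=
  PowerSeries.mk fun n => ∑ k ∈ Finset.range (n + 1),
    PowerSeries.coeff k P * PowerSeries.coeff n (H ^ k)

/-!
Write `D_G a = dualSeq G a`, i.e. `(D_G a)(n) = ∑_m coeff_m(G^n) a_m`, so that
`v_z = D_{Hinv} u_z`. A series `G` supported on powers of `p` is additive in characteristic `p`:
`G(X + Y) = G(X) + G(Y)`. Comparing the coefficients of `X^a Y^b` in
`G(X + Y)^n = (G(X) + G(Y))^n` gives
`C(a+b, a) coeff_{a+b}(G^n) = ∑_k C(n, k) coeff_a(G^k) coeff_b(G^(n-k))`,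
and a Cauchy-product rearrangement, legitimate for null sequences in a complete ultrametric field,
turns this into `D_G (a ⋆ b) = D_G a ⋆ D_G b` for the binomial convolution `⋆`. Thus `D_{Hinv}`
carries the binomial identity of `u` to `v`. Conversely, `D_H ∘ D_{Hinv} = D_{H ∘ Hinv}` is the
identity on null sequences, and `D_H` carries the identity of `v` back to `u`.
-/

open PowerSeries Topology Finset
open scoped Polynomial

namespace Polynomial

variable {R : Type*} [CommRing R]

theorem coeff_taylor_X_map_C (q : R[X]) (a : ℕ) :
    (taylor (X : R[X]) (q.map C)).coeff a = hasseDeriv a q := by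
  have hmap : hasseDeriv a (q.map C) = (hasseDeriv a q).map C := by
    ext m : 1
    simp [hasseDeriv_coeff]
  rw [taylor_coeff, hmap, eval_map, eval₂_C_X]

variable {p : ℕ} [Fact p.Prime] [CharP R p]

theorem taylor_eq_add_C_eval {g : R[X]} (hg : ∀ n, (¬ ∃ e, n = p ^ e) → g.coeff n = 0) (r : R) :
    taylor r g = g + C (g.eval r) := by
  have hmon : ∀ i ∈ g.support,
      taylor r (monomial i (g.coeff i)) = monomial i (g.coeff i) + C (g.coeff i * r ^ i) := by
    intro i hi
    obtain ⟨e, rfl⟩ : ∃ e, i = p ^ e := by_contra fun h => mem_support_iff.mp hi (hg i h)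
    rw [taylor_monomial, add_pow_char_pow, ← C_pow, C_mul, mul_add, C_mul_X_pow_eq_monomial]
  conv_lhs => rw [as_sum_support g]
  rw [map_sum, sum_congr rfl hmon, sum_add_distrib, ← as_sum_support, eval_eq_sum, sum_def,
    map_sum]

/-- `R[X, Y]` is modelled as `R[X][X]` with the inner variable as `Y`, so that
`taylor X (g.map C)` is `g(X + Y)`; additivity of `g` makes it `g(X) + g(Y)`. -/
theorem choose_mul_coeff_pow {g : R[X]} (hg : ∀ n, (¬ ∃ e, n = p ^ e) → g.coeff n = 0)
    (n a b : ℕ) :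
    ((a + b).choose a : R) * (g ^ n).coeff (a + b) =
      ∑ k ∈ range (n + 1), (n.choose k : R) * (g ^ k).coeff a * (g ^ (n - k)).coeff b := by
  have hadd : taylor (X : R[X]) ((g ^ n).map C) = (g.map C + C g) ^ n := by
    rw [Polynomial.map_pow, taylor_pow, taylor_eq_add_C_eval (p := p), eval_map, eval₂_C_X]
    intro m hm
    rw [coeff_map, hg m hm, C_0]
  have hcoeff := congrArg (fun f => (f.coeff a).coeff b) hadd
  simp only [coeff_taylor_X_map_C, hasseDeriv_coeff, add_pow, finsetSum_coeff, ← C_pow,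
    ← Polynomial.map_pow, coeff_mul_natCast, coeff_mul_C, coeff_map, coeff_C_mul] at hcoeff
  rw [add_comm b a] at hcoeff
  rw [hcoeff]
  exact sum_congr rfl fun k _ => by ring

end Polynomial

namespace PowerSeries

variable {R : Type*} [CommRing R]

theorem coeff_trunc_pow_of_lt {N m : ℕ} (h : m < N) (G : R⟦X⟧) (k : ℕ) :
    ((trunc N G) ^ k).coeff m = coeff m (G ^ k) := by
  rw [← Polynomial.coeff_coe, Polynomial.coe_pow, ← coeff_coe_trunc_of_lt h, trunc_trunc_pow,
    coeff_coe_trunc_of_lt h]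

theorem coeff_pow_eq_zero_of_lt {G : R⟦X⟧} (hG : constantCoeff G = 0) {m n : ℕ} (h : m < n) :
    coeff m (G ^ n) = 0 :=
  X_pow_dvd_iff.mp (pow_dvd_pow_of_dvd (X_dvd_iff.mpr hG) n) m h

theorem choose_mul_coeff_pow {p : ℕ} [Fact p.Prime] [CharP R p] {G : R⟦X⟧}
    (hG : ∀ n, (¬ ∃ e, n = p ^ e) → coeff n G = 0) (n a b : ℕ) :
    ((a + b).choose a : R) * coeff (a + b) (G ^ n) =
      ∑ k ∈ range (n + 1), (n.choose k : R) * coeff a (G ^ k) * coeff b (G ^ (n - k)) := by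
  have hN := Nat.lt_succ_self (a + b)
  simp only [← coeff_trunc_pow_of_lt hN,
    ← coeff_trunc_pow_of_lt ((Nat.le_add_right a b).trans_lt hN),
    ← coeff_trunc_pow_of_lt ((Nat.le_add_left b a).trans_lt hN)]
  exact Polynomial.choose_mul_coeff_pow (p := p)
    (fun m hm => by rw [coeff_trunc, hG m hm, ite_self]) n a b

end PowerSeries

section Composition

variable {R : Type*} [Field R]

theorem psComp_eq_subst (P : R⟦X⟧) {K : R⟦X⟧} (hK : constantCoeff K = 0) :
    psComp P K = P.subst K := by
  ext n
  rw [psComp, coeff_mk, coeff_subst' (.of_constantCoeff_zero' hK),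
    finsum_eq_sum_of_support_subset _ (s := range (n + 1))]
  · rfl
  · intro k hk
    by_contra h
    simp only [coe_range, Set.mem_Iio, not_lt] at h
    exact hk (by simp only [coeff_pow_eq_zero_of_lt hK (show n < k by omega), smul_zero])

theorem psComp_pow (P : R⟦X⟧) {K : R⟦X⟧} (hK : constantCoeff K = 0) (n : ℕ) :
    psComp (P ^ n) K = psComp P K ^ n := by
  rw [psComp_eq_subst _ hK, psComp_eq_subst _ hK, subst_pow (.of_constantCoeff_zero' hK)]

end Composition

def binomConv {R : Type*} [Semiring R] (a b : ℕ → R) (n : ℕ) : R :=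
  ∑ k ∈ range (n + 1), (n.choose k : R) * a k * b (n - k)

noncomputable def dualSeq {R : Type*} [CommSemiring R] [TopologicalSpace R] (G : R⟦X⟧)
    (a : ℕ → R) (n : ℕ) : R :=
  ∑' m, coeff m (G ^ n) * a m

theorem binomConv_eq_sum_antidiagonal {R : Type*} [Semiring R] (a b : ℕ → R) (n : ℕ) :
    binomConv a b n = ∑ q ∈ antidiagonal n, (n.choose q.1 : R) * a q.1 * b q.2 := by
  rw [binomConv, Nat.sum_antidiagonal_eq_sum_range_succ_mk]

theorem coeff_pow_mul_binomConv {R : Type*} [CommRing R] {p : ℕ} [Fact p.Prime] [CharP R p]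
    {G : R⟦X⟧} (hG : ∀ n, (¬ ∃ e, n = p ^ e) → coeff n G = 0) (a b : ℕ → R) (n m : ℕ) :
    coeff m (G ^ n) * binomConv a b m = ∑ k ∈ range (n + 1), (n.choose k : R) *
      ∑ q ∈ antidiagonal m, coeff q.1 (G ^ k) * a q.1 * (coeff q.2 (G ^ (n - k)) * b q.2) := by
  rw [binomConv_eq_sum_antidiagonal, mul_sum]
  simp_rw [mul_sum]
  rw [sum_comm]
  refine sum_congr rfl fun q hq => ?_
  rw [HasAntidiagonal.mem_antidiagonal] at hq
  subst hq
  calc coeff (q.1 + q.2) (G ^ n) * (((q.1 + q.2).choose q.1 : R) * a q.1 * b q.2)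
      = ((q.1 + q.2).choose q.1 : R) * coeff (q.1 + q.2) (G ^ n) * (a q.1 * b q.2) := by ring
    _ = _ := by
      rw [choose_mul_coeff_pow hG, sum_mul]
      exact sum_congr rfl fun k _ => by ring

theorem dualSeq_X {R : Type*} [CommSemiring R] [TopologicalSpace R] (a : ℕ → R) :
    dualSeq X a = a := by
  funext n
  simp only [dualSeq, coeff_X_pow, ite_mul, one_mul, zero_mul, tsum_ite_eq]

instance IsUltrametricDist.nonarchimedeanRing {R : Type*} [NormedRing R] [IsUltrametricDist R] :
    NonarchimedeanRing R where
  is_nonarchimedean := NonarchimedeanAddGroup.is_nonarchimedean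

section Summability

variable {E : Type*} [NormedAddCommGroup E] [IsUltrametricDist E] [CompleteSpace E]

theorem summable_of_tendsto_atTop_zero {a : ℕ → E} (ha : Tendsto a atTop (𝓝 0)) : Summable a :=
  NonarchimedeanAddGroup.summable_of_tendsto_cofinite_zero (Nat.cofinite_eq_atTop ▸ ha)

theorem summable_prod_of_norm_le_max {f : ℕ × ℕ → E} {a : ℕ → E} (ha : Tendsto a atTop (𝓝 0))
    (h : ∀ q, ‖f q‖ ≤ ‖a (max q.1 q.2)‖) : Summable f := by
  have hmax : Tendsto (fun q : ℕ × ℕ => max q.1 q.2) cofinite atTop := by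
    rw [← coprod_cofinite, Nat.cofinite_eq_atTop]
    exact (tendsto_atTop_mono (fun q => le_max_left _ _) tendsto_comap).sup
      (tendsto_atTop_mono (fun q => le_max_right _ _) tendsto_comap)
  refine NonarchimedeanAddGroup.summable_of_tendsto_cofinite_zero (squeeze_zero_norm h ?_)
  simpa using (ha.comp hmax).norm

end Summability

section Ultrametric

variable {F : Type*} [NormedField F] [IsUltrametricDist F]

theorem norm_coeff_pow_le_one {G : F⟦X⟧} (hG : ∀ n, ‖coeff n G‖ ≤ 1) (k m : ℕ) :
    ‖coeff m (G ^ k)‖ ≤ 1 := by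
  induction k generalizing m with
  | zero => rw [pow_zero, coeff_one]; split_ifs <;> simp
  | succ k ih =>
    rw [pow_succ, coeff_mul]
    refine IsUltrametricDist.norm_sum_le_of_forall_le_of_nonneg zero_le_one fun q _ => ?_
    rw [norm_mul]
    exact mul_le_one₀ (ih q.1) (norm_nonneg _) (hG q.2)

theorem norm_coeff_pow_mul_le {G : F⟦X⟧} (hG : ∀ n, ‖coeff n G‖ ≤ 1) (k m : ℕ) (x : F) :
    ‖coeff m (G ^ k) * x‖ ≤ ‖x‖ := by
  rw [norm_mul]
  exact mul_le_of_le_one_left (norm_nonneg x) (norm_coeff_pow_le_one hG k m)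

theorem tendsto_dualSeq_zero {G : F⟦X⟧} (hG0 : constantCoeff G = 0) (hG : ∀ n, ‖coeff n G‖ ≤ 1)
    {a : ℕ → F} (ha : Tendsto a atTop (𝓝 0)) : Tendsto (dualSeq G a) atTop (𝓝 0) := by
  rw [NormedAddGroup.tendsto_nhds_zero] at ha ⊢
  intro ε hε
  obtain ⟨N, hN⟩ := eventually_atTop.mp (ha (ε / 2) (half_pos hε))
  filter_upwards [eventually_ge_atTop N] with k hk
  refine lt_of_le_of_lt (IsUltrametricDist.norm_tsum_le_of_forall_le_of_nonneg (half_pos hε).le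
    fun m => ?_) (half_lt_self hε)
  rcases lt_or_ge m k with hm | hm
  · rw [coeff_pow_eq_zero_of_lt hG0 hm, zero_mul, norm_zero]
    exact (half_pos hε).le
  · exact (norm_coeff_pow_mul_le hG k m (a m)).trans (hN m (hk.trans hm)).le

variable [CompleteSpace F]

theorem summable_coeff_pow_mul {G : F⟦X⟧} (hG : ∀ n, ‖coeff n G‖ ≤ 1) {a : ℕ → F}
    (ha : Tendsto a atTop (𝓝 0)) (k : ℕ) : Summable fun m => coeff m (G ^ k) * a m := by
  refine summable_of_tendsto_atTop_zero (squeeze_zero_norm (norm_coeff_pow_mul_le hG k · _) ?_)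
  simpa using ha.norm

theorem dualSeq_binomConv {p : ℕ} [Fact p.Prime] [CharP F p] {G : F⟦X⟧}
    (hGp : ∀ n, (¬ ∃ e, n = p ^ e) → coeff n G = 0) (hG : ∀ n, ‖coeff n G‖ ≤ 1) {a b : ℕ → F}
    (ha : Tendsto a atTop (𝓝 0)) (hb : Tendsto b atTop (𝓝 0)) :
    dualSeq G (binomConv a b) = binomConv (dualSeq G a) (dualSeq G b) := by
  funext n
  -- named factors spare the Cauchy-product lemmas a costly higher-order unification
  let f (k m : ℕ) : F := coeff m (G ^ k) * a m
  let g (k m : ℕ) : F := coeff m (G ^ k) * b m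
  have hprod (k l : ℕ) : Summable fun q : ℕ × ℕ => f k q.1 * g l q.2 :=
    (summable_coeff_pow_mul hG ha k).mul_of_nonarchimedean (summable_coeff_pow_mul hG hb l)
  have hrow (k : ℕ) : Summable fun m => (n.choose k : F) * ∑ q ∈ antidiagonal m,
      f k q.1 * g (n - k) q.2 :=
    (summable_sum_mul_antidiagonal_of_summable_mul (hprod k (n - k))).mul_left _
  calc dualSeq G (binomConv a b) n
      = ∑' m, ∑ k ∈ range (n + 1), (n.choose k : F) * ∑ q ∈ antidiagonal m,
          f k q.1 * g (n - k) q.2 :=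
        tsum_congr (coeff_pow_mul_binomConv hGp a b n)
    _ = ∑ k ∈ range (n + 1), (n.choose k : F) * ∑' m, ∑ q ∈ antidiagonal m,
          f k q.1 * g (n - k) q.2 := by
        rw [Summable.tsum_finsetSum fun k _ => hrow k]
        exact sum_congr rfl fun k _ => tsum_mul_left
    _ = binomConv (dualSeq G a) (dualSeq G b) n := by
        refine sum_congr rfl fun k _ => ?_
        rw [← Summable.tsum_mul_tsum_eq_tsum_sum_antidiagonal (summable_coeff_pow_mul hG ha k)
          (summable_coeff_pow_mul hG hb (n - k)) (hprod k (n - k)), mul_assoc]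
        rfl

theorem dualSeq_dualSeq {G K : F⟦X⟧} (hG : ∀ n, ‖coeff n G‖ ≤ 1) (hK0 : constantCoeff K = 0)
    (hK : ∀ n, ‖coeff n K‖ ≤ 1) {a : ℕ → F} (ha : Tendsto a atTop (𝓝 0)) :
    dualSeq G (dualSeq K a) = dualSeq (psComp G K) a := by
  funext n
  let f (k m : ℕ) : F := coeff k (G ^ n) * (coeff m (K ^ k) * a m)
  have hvanish {k m : ℕ} (h : m < k) : f k m = 0 := by
    simp only [f, coeff_pow_eq_zero_of_lt hK0 h, zero_mul, mul_zero]
  have hsum : Summable (Function.uncurry f) := by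
    refine summable_prod_of_norm_le_max ha fun q => ?_
    rcases lt_or_ge q.2 q.1 with h | h
    · exact (norm_eq_zero.mpr (hvanish h)).trans_le (norm_nonneg _)
    · rw [max_eq_right h]
      exact (norm_coeff_pow_mul_le hG _ _ _).trans (norm_coeff_pow_mul_le hK _ _ _)
  have hcol (m : ℕ) : ∑' k, f k m = ∑ k ∈ range (m + 1), f k m :=
    tsum_eq_sum fun k hk => hvanish (by simpa using hk)
  calc dualSeq G (dualSeq K a) n
      = ∑' k, ∑' m, f k m := tsum_congr fun k => tsum_mul_left.symm
    _ = ∑' m, ∑' k, f k m :=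
        (hsum.tsum_comm' (fun k => (summable_coeff_pow_mul hK ha k).mul_left _)
          fun m => summable_of_ne_finset_zero (s := range (m + 1)) fun k hk =>
            hvanish (by simpa using hk)).symm
    _ = dualSeq (psComp G K) a n := by
        refine tsum_congr fun m => ?_
        rw [hcol, ← psComp_pow _ hK0, psComp, coeff_mk, sum_mul]
        exact sum_congr rfl fun k _ => (mul_assoc _ _ _).symm

end Ultrametric

theorem dual_binomial_iff_general {F : Type*} [NormedField F] [CompleteSpace F]
    (hna : ∀ x y : F, ‖x + y‖ ≤ max ‖x‖ ‖y‖)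
    (p : ℕ) (hp : p.Prime) (hchar : CharP F p)
    (H Hinv : PowerSeries F) (hH : IsAddGen p H) (hHinv : IsAddGen p Hinv)
    (hinv₂ : psComp H Hinv = PowerSeries.X)
    (S : Set F) (u : F → ℕ → F)
    (huS : ∀ z ∈ S, Tendsto (u z) atTop (nhds 0))
    (huS' : ∀ x ∈ S, ∀ y ∈ S, Tendsto (u (x + y)) atTop (nhds 0)) :
    (∀ x ∈ S, ∀ y ∈ S, ∀ n : ℕ,
        u (x + y) n = ∑ k ∈ Finset.range (n + 1), (n.choose k : F) * u x k * u y (n - k)) ↔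
      (∀ x ∈ S, ∀ y ∈ S, ∀ n : ℕ,
        (∑' m : ℕ, PowerSeries.coeff m (Hinv ^ n) * u (x + y) m) =
          ∑ k ∈ Finset.range (n + 1), (n.choose k : F) *
            (∑' m : ℕ, PowerSeries.coeff m (Hinv ^ k) * u x m) *
            (∑' m : ℕ, PowerSeries.coeff m (Hinv ^ (n - k)) * u y m)) := by
  have : IsUltrametricDist F := .isUltrametricDist_of_isNonarchimedean_norm hna
  have := hchar
  have := Fact.mk hp
  obtain ⟨-, hHp, hHle, -⟩ := hH
  obtain ⟨hHinv0, hHinvp, hHinvle, -⟩ := hHinv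
  have hinvert {a : ℕ → F} (ha : Tendsto a atTop (𝓝 0)) : dualSeq H (dualSeq Hinv a) = a := by
    rw [dualSeq_dualSeq hHle hHinv0 hHinvle ha, hinv₂, dualSeq_X]
  change (∀ x ∈ S, ∀ y ∈ S, ∀ n, u (x + y) n = binomConv (u x) (u y) n) ↔
    ∀ x ∈ S, ∀ y ∈ S, ∀ n,
      dualSeq Hinv (u (x + y)) n = binomConv (dualSeq Hinv (u x)) (dualSeq Hinv (u y)) n
  refine forall₂_congr fun x hx => forall₂_congr fun y hy => ?_
  rw [← funext_iff, ← funext_iff]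
  refine ⟨fun h => ?_, fun h => ?_⟩
  · rw [h, dualSeq_binomConv hHinvp hHinvle (huS x hx) (huS y hy)]
  · have hv {z} (hz : Tendsto (u z) atTop (𝓝 0)) := tendsto_dualSeq_zero hHinv0 hHinvle hz
    rw [← hinvert (huS' x hx y hy), h, dualSeq_binomConv hHp hHle (hv (huS x hx)) (hv (huS y hy)),
      hinvert (huS x hx), hinvert (huS y hy)]

/-- Duality preserves the binomial theorem: the family `u` satisfies the
binomial theorem with respect to `S` if and only if its dual family
`v_z(k) = ∑_m coeff_m(Hinv^k)·u_z(m)` does. -/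
theorem dual_binomial_iff {F : Type*} [NormedField F] [CompleteSpace F]
    (hna : ∀ x y : F, ‖x + y‖ ≤ max ‖x‖ ‖y‖)
    (p : ℕ) (hp : p.Prime) (hchar : CharP F p)
    (H Hinv : PowerSeries F) (hH : IsAddGen p H) (hHinv : IsAddGen p Hinv)
    (hinv₁ : psComp Hinv H = PowerSeries.X) (hinv₂ : psComp H Hinv = PowerSeries.X)
    (S : Set F) (u : F → ℕ → F) (hu0 : ∀ z : F, u z 0 = 1)
    (huS : ∀ z ∈ S, Tendsto (u z) atTop (nhds 0))
    (huS' : ∀ x ∈ S, ∀ y ∈ S, Tendsto (u (x + y)) atTop (nhds 0)) :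
    (∀ x ∈ S, ∀ y ∈ S, ∀ n : ℕ,
        u (x + y) n = ∑ k ∈ Finset.range (n + 1), (n.choose k : F) * u x k * u y (n - k)) ↔
      (∀ x ∈ S, ∀ y ∈ S, ∀ n : ℕ,
        (∑' m : ℕ, PowerSeries.coeff m (Hinv ^ n) * u (x + y) m) =
          ∑ k ∈ Finset.range (n + 1), (n.choose k : F) *
            (∑' m : ℕ, PowerSeries.coeff m (Hinv ^ k) * u x m) *
            (∑' m : ℕ, PowerSeries.coeff m (Hinv ^ (n - k)) * u y m)) :=
  dual_binomial_iff_general hna p hp hchar H Hinv hH hHinv hinv₂ S u huS huS'
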